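/- Let r ≥ 2 and H(X,Y) = Σ_{0<j<r} C(r,j) X^{r-j}Y^j. Then H(2X, Y) ≡ 2rXY^{r-1} + 2r(r-1)X²Y^{r-2} modulo 2^{t+2} where t = v(r-1); in particular H(2X,Y) ≡ 0 mod 4 when r is even. -/

import Mathlib

/-!
Write `i = r - j` for the power of `2X`. The terms `i = 1, 2` are exactly `2rXY^(r-1)` and
`2r(r-1)X²Y^(r-2)`. For `i ≥ 3` the identity `i(i-1)·C(r,i) = r(r-1)·C(r-2,i-2)` gives
`v(r-1) ≤ v(i(i-1)) + v(C(r,i))`, and `v(i(i-1)) + 2 ≤ i` because one of `i, i-1` is odd; hence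
`2^(v(r-1)+2)` divides `C(r,i)·2^i`. The term `j = 0` missing from the sum is `(2X)^r`, also
divisible since `v(r-1) < r-1`.
-/

open MvPolynomial

theorem Nat.mul_sub_one_mul_choose_eq (r : ℕ) {i : ℕ} (hi : 2 ≤ i) :
    i * (i - 1) * r.choose i = r * (r - 1) * (r - 2).choose (i - 2) := by
  obtain ⟨k, rfl⟩ := Nat.exists_eq_add_of_le' hi
  rcases Nat.lt_or_ge r 2 with hr | hr
  · interval_cases r <;> simp [Nat.choose_eq_zero_of_lt]
  obtain ⟨n, rfl⟩ := Nat.exists_eq_add_of_le' hr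
  have h₁ := Nat.add_one_mul_choose_eq (n + 1) (k + 1)
  have h₂ := Nat.add_one_mul_choose_eq n k
  show (k + 2) * (k + 1) * (n + 2).choose (k + 2) = (n + 2) * (n + 1) * n.choose k
  linear_combination (k + 1) * h₁.symm + (n + 2) * h₂.symm

lemma padicValNat_lt_self (p : ℕ) {n : ℕ} (hn : n ≠ 0) : padicValNat p n < n :=
  (padicValNat_le_nat_log n).trans_lt (Nat.log_lt_self p hn)

lemma padicValNat_two_mul_sub_one_add_two_le {i : ℕ} (hi : 3 ≤ i) :
    padicValNat 2 (i * (i - 1)) + 2 ≤ i := by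
  rw [padicValNat.mul (by omega) (by omega)]
  rcases Nat.even_or_odd i with ⟨k, hk⟩ | ⟨k, hk⟩
  · have hzero : padicValNat 2 (i - 1) = 0 := padicValNat.eq_zero_of_not_dvd (by omega)
    have := padicValNat_add_le_self (p := 2) (a := i) (by omega)
    omega
  · have hzero : padicValNat 2 i = 0 := padicValNat.eq_zero_of_not_dvd (by omega)
    have := padicValNat_lt_self 2 (n := i - 1) (by omega)
    omega

theorem two_pow_dvd_choose_mul_two_pow (r : ℕ) {i : ℕ} (hi : 3 ≤ i) :
    2 ^ (padicValNat 2 (r - 1) + 2) ∣ r.choose i * 2 ^ i := by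
  rcases Nat.lt_or_ge r i with hri | hir
  · simp [Nat.choose_eq_zero_of_lt hri]
  have hchoose : r.choose i ≠ 0 := (Nat.choose_pos hir).ne'
  have hprod : i * (i - 1) ≠ 0 := Nat.mul_ne_zero (by omega) (by omega)
  have hdvd : 2 ^ padicValNat 2 (r - 1) ∣ i * (i - 1) * r.choose i :=
    pow_padicValNat_dvd.trans
      ⟨r * (r - 2).choose (i - 2), by rw [Nat.mul_sub_one_mul_choose_eq r (by omega)]; ring⟩
  rw [padicValNat_dvd_iff_le (Nat.mul_ne_zero hprod hchoose), padicValNat.mul hprod hchoose]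
    at hdvd
  rw [padicValNat_dvd_iff_le (by positivity), padicValNat.mul hchoose (by positivity),
    padicValNat.prime_pow]
  have := padicValNat_two_mul_sub_one_add_two_le hi
  omega

section CommRing

variable {A : Type*} [CommRing A]

theorem two_pow_dvd_choose_mul_two_mul_pow (x y : A) {r j : ℕ} (hj : j + 3 ≤ r) :
    (2 : A) ^ (padicValNat 2 (r - 1) + 2) ∣ (r.choose j : A) * (2 * x) ^ (r - j) * y ^ j := by
  have h := two_pow_dvd_choose_mul_two_pow r (i := r - j) (by omega)
  rw [Nat.choose_symm (by omega)] at h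
  obtain ⟨c, hc⟩ := Nat.cast_dvd_cast (α := A) h
  push_cast at hc
  exact ⟨c * x ^ (r - j) * y ^ j, by linear_combination x ^ (r - j) * y ^ j * hc⟩

theorem two_pow_dvd_sum_choose_mul_two_mul_pow_sub (x y : A) {r : ℕ} (hr : 2 ≤ r) :
    (2 : A) ^ (padicValNat 2 (r - 1) + 2) ∣
      ∑ j ∈ Finset.Ioo 0 r, (r.choose j : A) * (2 * x) ^ (r - j) * y ^ j
        - (2 * r * x * y ^ (r - 1) + 2 * r * (r - 1) * x ^ 2 * y ^ (r - 2)) := by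
  obtain ⟨n, rfl⟩ := Nat.exists_eq_add_of_le' hr
  set f : ℕ → A := fun j ↦ ((n + 2).choose j : A) * (2 * x) ^ (n + 2 - j) * y ^ j
  have hsplit : ∑ j ∈ Finset.Ioo 0 (n + 2), f j
      = ∑ j ∈ Finset.range n, f j - f 0 + f n + f (n + 1) := by
    have h := Finset.sum_range_eq_add_Ico f (n := n + 2) (by omega)
    rw [Finset.sum_range_succ, Finset.sum_range_succ] at h
    rw [← Finset.Ico_add_one_left_eq_Ioo, zero_add]
    linear_combination -h
  have hlast : f (n + 1) = 2 * (n + 2 : ℕ) * x * y ^ (n + 2 - 1) := by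
    simp only [f, Nat.choose_succ_self_right, Nat.reduceSubDiff, add_tsub_cancel_left, pow_one]
    push_cast
    ring
  have hsecond : f n = 2 * (n + 2 : ℕ) * ((n + 2 : ℕ) - 1) * x ^ 2 * y ^ (n + 2 - 2) := by
    have h : 2 * (n + 2).choose n = (n + 2) * (n + 1) := by
      rw [Nat.choose_symm_add]
      simpa using Nat.mul_sub_one_mul_choose_eq (n + 2) le_rfl
    calc f n = ((2 * (n + 2).choose n : ℕ) : A) * 2 * x ^ 2 * y ^ n := by
          simp only [f, add_tsub_cancel_left, Nat.cast_mul, Nat.cast_ofNat]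
          ring
      _ = _ := by rw [h]; push_cast; ring
  have hfirst : (2 : A) ^ (padicValNat 2 (n + 2 - 1) + 2) ∣ f 0 := by
    have hle : padicValNat 2 (n + 2 - 1) + 2 ≤ n + 2 := by
      have := padicValNat_lt_self 2 (n := n + 2 - 1) (by omega)
      omega
    simpa [f, mul_pow] using (pow_dvd_pow (2 : A) hle).mul_right (x ^ (n + 2))
  have hrest : (2 : A) ^ (padicValNat 2 (n + 2 - 1) + 2) ∣ ∑ j ∈ Finset.range n, f j :=
    Finset.dvd_sum fun j hj ↦
      two_pow_dvd_choose_mul_two_mul_pow x y (by rw [Finset.mem_range] at hj; omega)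
  convert dvd_sub hrest hfirst using 1
  rw [hsplit, hlast, hsecond]
  ring

theorem four_dvd_sum_choose_mul_two_mul_pow (x y : A) {r : ℕ} (hr : 2 ≤ r) (heven : Even r) :
    (4 : A) ∣ ∑ j ∈ Finset.Ioo 0 r, (r.choose j : A) * (2 * x) ^ (r - j) * y ^ j := by
  obtain ⟨Q, hQ⟩ := two_pow_dvd_sum_choose_mul_two_mul_pow_sub x y hr
  obtain ⟨k, rfl⟩ := heven
  rw [padicValNat.eq_zero_of_not_dvd (by omega : ¬ 2 ∣ k + k - 1)] at hQ
  refine ⟨Q + k * x * y ^ (k + k - 1) + k * ((k + k : ℕ) - 1) * x ^ 2 * y ^ (k + k - 2), ?_⟩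
  push_cast at hQ ⊢
  linear_combination hQ

end CommRing

/-- Let `r ≥ 2` and `H(X,Y) = Σ_{0<j<r} C(r,j) X^(r-j)Y^j`. Then
`H(2X, Y) ≡ 2rXY^(r-1) + 2r(r-1)X²Y^(r-2)` modulo `2^(t+2)` where `t = v(r-1)`;
in particular `H(2X,Y) ≡ 0 mod 4` when `r` is even. -/
theorem stmt_14 (r : ℕ) (hr : 2 ≤ r) :
    (∃ Q : MvPolynomial (Fin 2) ℤ,
      ∑ j ∈ Finset.Ioo 0 r, C ((r.choose j : ℤ)) * (2 * X 0) ^ (r - j) * X 1 ^ j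
        = C (2 * (r : ℤ)) * X 0 * X 1 ^ (r - 1)
          + C (2 * (r : ℤ) * ((r : ℤ) - 1)) * X 0 ^ 2 * X 1 ^ (r - 2)
          + C ((2 : ℤ) ^ (padicValNat 2 (r - 1) + 2)) * Q)
    ∧ (Even r → ∃ Q : MvPolynomial (Fin 2) ℤ,
      ∑ j ∈ Finset.Ioo 0 r, C ((r.choose j : ℤ)) * (2 * X 0) ^ (r - j) * X 1 ^ j
        = C (4 : ℤ) * Q) := by
  simp only [map_mul, map_sub, map_pow, map_natCast, map_ofNat, map_one]
  obtain ⟨Q, hQ⟩ :=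
    two_pow_dvd_sum_choose_mul_two_mul_pow_sub (X 0 : MvPolynomial (Fin 2) ℤ) (X 1) hr
  exact ⟨⟨Q, by linear_combination hQ⟩, four_dvd_sum_choose_mul_two_mul_pow _ _ hr⟩
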